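/- arXiv:1709.01379 — 6 statements merged into one kernel-verified Lean document; each statement's English description precedes it below -/
import Mathlib

section
/- Let K be a compact metric space that is connected and locally path-connected. Then for any continuous function f from a closed subset E of [0,1] into K, there exists a continuous extension of f to a continuous function from [0,1] into K. -/
/-!
Fill every gap `(c, d)` of `E` with a path from `f c` to `f d`, reparametrised linearly over
`[c, d]`. Inside a gap, and from the side of a point of `E` that bounds a gap, continuity is that
of the path. From a side on which `E` accumulates at `x₀`, the endpoints of the gaps tend to
`x₀`, so their images tend to `f x₀`; if the paths are chosen of nearly minimal diameter, local
path-connectedness forces their images to shrink to `f x₀` as well. Beyond `[min E, max E]` the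
extension is constant.
-/

open Set Filter Topology Metric
open scoped ENNReal

def IsLocalPathChoice {X : Type*} [TopologicalSpace X] (P : ∀ u v : X, Path u v) : Prop :=
  ∀ w : X, Tendsto (fun p : X × X => range (P p.1 p.2)) (𝓝 (w, w)) (𝓝 w).smallSets

section PathChoice

variable {X : Type*} [MetricSpace X]

noncomputable def pathEDiamInf (u v : X) : ℝ≥0∞ :=
  ⨅ p : Path u v, ediam (range p)

lemma edist_le_pathEDiamInf (u v : X) : edist u v ≤ pathEDiamInf u v :=
  le_iInf fun p => edist_le_ediam_of_mem ⟨0, p.source⟩ ⟨1, p.target⟩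

lemma Joined.exists_path_ediam_range_le {u v : X} (h : Joined u v) :
    ∃ p : Path u v, ediam (range p) ≤ 2 * pathEDiamInf u v := by
  rcases eq_or_ne u v with rfl | huv
  · exact ⟨Path.refl u, by simp⟩
  -- A minimising path need not exist, but for `u ≠ v` the infimum is positive and finite.
  have : Nonempty (Path u v) := h
  have hpos : pathEDiamInf u v ≠ 0 :=
    ((edist_pos.2 huv).trans_le (edist_le_pathEDiamInf u v)).ne'
  have htop : pathEDiamInf u v ≠ ⊤ := ne_top_of_le_ne_top
    (isCompact_range h.somePath.continuous).isBounded.ediam_ne_top (iInf_le _ _)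
  obtain ⟨p, hp⟩ := iInf_lt_iff.1 (show pathEDiamInf u v < 2 * pathEDiamInf u v by
    rw [two_mul]; exact ENNReal.lt_add_right htop hpos)
  exact ⟨p, hp.le⟩

lemma tendsto_pathEDiamInf_nhds_diag [LocallyPathConnectedSpace X] (w : X) :
    Tendsto (fun p : X × X => pathEDiamInf p.1 p.2) (𝓝 (w, w)) (𝓝 0) := by
  refine ENNReal.tendsto_nhds_zero.2 fun ε hε => ?_
  obtain ⟨s, ⟨hs, hsp⟩, hsε⟩ := (path_connected_basis w).mem_iff.1
    (eball_mem_nhds w (ENNReal.half_pos hε.ne'))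
  filter_upwards [prod_mem_nhds hs hs] with ⟨u, v⟩ ⟨hu, hv⟩
  let p := (hsp.joinedIn u hu v hv).somePath
  calc pathEDiamInf u v ≤ ediam (range p) := iInf_le _ _
    _ ≤ ediam (eball w (ε / 2)) :=
        ediam_mono (range_subset_iff.2 fun t => hsε (JoinedIn.somePath_mem _ t))
    _ ≤ 2 * (ε / 2) := ediam_eball_le
    _ = ε := by rw [two_mul, ENNReal.add_halves]

theorem exists_isLocalPathChoice [PathConnectedSpace X] [LocallyPathConnectedSpace X] :
    ∃ P : ∀ u v : X, Path u v, IsLocalPathChoice P := by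
  choose P hP using fun u v : X => (PathConnectedSpace.joined u v).exists_path_ediam_range_le
  refine ⟨P, fun w => ?_⟩
  have hsmall : Tendsto (fun p : X × X => 2 * pathEDiamInf p.1 p.2 + edist p.1 w)
      (𝓝 (w, w)) (𝓝 0) := by
    simpa using (ENNReal.Tendsto.const_mul (tendsto_pathEDiamInf_nhds_diag w)
      (Or.inr (ENNReal.ofNat_ne_top (n := 2)))).add
        ((continuous_fst.edist continuous_const).tendsto' (w, w) 0 (edist_self w))
  refine nhds_basis_eball.smallSets.tendsto_right_iff.2 fun ε hε => ?_
  filter_upwards [hsmall.eventually (gt_mem_nhds hε)] with ⟨u, v⟩ huv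
  rintro _ ⟨t, rfl⟩
  calc edist (P u v t) w ≤ edist (P u v t) u + edist u w := edist_triangle _ _ _
    _ ≤ 2 * pathEDiamInf u v + edist u w := by
        gcongr
        exact (edist_le_ediam_of_mem (mem_range_self t) ⟨0, (P u v).source⟩).trans (hP u v)
    _ < ε := huv

end PathChoice

noncomputable section GapFill

variable {E : Set ℝ} {x c d e : ℝ}

def gapLeft (E : Set ℝ) (x : ℝ) : ℝ := sSup (E ∩ Iic x)

def gapRight (E : Set ℝ) (x : ℝ) : ℝ := sInf (E ∩ Ici x)

lemma le_gapLeft (he : e ∈ E) (hex : e ≤ x) : e ≤ gapLeft E x :=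
  le_csSup ⟨x, fun _ h => h.2⟩ ⟨he, hex⟩

lemma gapRight_le (he : e ∈ E) (hxe : x ≤ e) : gapRight E x ≤ e :=
  csInf_le ⟨x, fun _ h => h.2⟩ ⟨he, hxe⟩

lemma gapLeft_mem (hE : IsClosed E) (h : (E ∩ Iic x).Nonempty) : gapLeft E x ∈ E ∩ Iic x :=
  (hE.inter isClosed_Iic).csSup_mem h ⟨x, fun _ h => h.2⟩

lemma gapRight_mem (hE : IsClosed E) (h : (E ∩ Ici x).Nonempty) : gapRight E x ∈ E ∩ Ici x :=
  (hE.inter isClosed_Ici).csInf_mem h ⟨x, fun _ h => h.2⟩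

lemma gapLeft_of_mem (hx : x ∈ E) : gapLeft E x = x :=
  IsGreatest.csSup_eq ⟨⟨hx, le_refl x⟩, fun _ h => h.2⟩

lemma gapRight_of_mem (hx : x ∈ E) : gapRight E x = x :=
  IsLeast.csInf_eq ⟨⟨hx, le_refl x⟩, fun _ h => h.2⟩

lemma gapLeft_eq (hc : c ∈ E) (hgap : Disjoint E (Ioo c d)) (hx : x ∈ Ico c d) :
    gapLeft E x = c :=
  IsGreatest.csSup_eq ⟨⟨hc, hx.1⟩, fun _ he =>
    not_lt.1 fun hce => disjoint_left.1 hgap he.1 ⟨hce, he.2.trans_lt hx.2⟩⟩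

lemma gapRight_eq (hd : d ∈ E) (hgap : Disjoint E (Ioo c d)) (hx : x ∈ Ioc c d) :
    gapRight E x = d :=
  IsLeast.csInf_eq ⟨⟨hd, hx.2⟩, fun _ he =>
    not_lt.1 fun hed => disjoint_left.1 hgap he.1 ⟨hx.1.trans_le he.2, hed⟩⟩

lemma disjoint_Ioo_gapLeft_gapRight (E : Set ℝ) (x : ℝ) :
    Disjoint E (Ioo (gapLeft E x) (gapRight E x)) := by
  refine disjoint_left.2 fun e he ⟨hce, hed⟩ => ?_
  rcases le_total e x with hex | hxe
  · exact (le_gapLeft he hex).not_gt hce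
  · exact (gapRight_le he hxe).not_gt hed

variable {X : Type*} [TopologicalSpace X]

/-- On `E` both gap endpoints equal `x`, and the junk value `0 / 0 = 0` makes `gapFill` agree
with `f` there. -/
def gapFill (P : ∀ u v : X, Path u v) (E : Set ℝ) (f : ℝ → X) (x : ℝ) : X :=
  (P (f (gapLeft E x)) (f (gapRight E x))).extend
    ((x - gapLeft E x) / (gapRight E x - gapLeft E x))

variable {P : ∀ u v : X, Path u v} {f : ℝ → X}

lemma gapFill_of_mem (hx : x ∈ E) : gapFill P E f x = f x := by
  simp [gapFill, gapLeft_of_mem hx, gapRight_of_mem hx]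

lemma gapFill_mem_range (P : ∀ u v : X, Path u v) (E : Set ℝ) (f : ℝ → X) (x : ℝ) :
    gapFill P E f x ∈ range (P (f (gapLeft E x)) (f (gapRight E x))) := by
  rw [← Path.extend_range]; exact mem_range_self _

lemma gapFill_eqOn_Ioo (hc : c ∈ E) (hd : d ∈ E) (hgap : Disjoint E (Ioo c d)) :
    EqOn (gapFill P E f) (fun x => (P (f c) (f d)).extend ((x - c) / (d - c))) (Ioo c d) :=
  fun x hx => by
    rw [gapFill, gapLeft_eq hc hgap (Ioo_subset_Ico_self hx),
      gapRight_eq hd hgap (Ioo_subset_Ioc_self hx)]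

lemma tendsto_gapLeft_nhdsGE (hE : IsClosed E) {x₀ : ℝ} (hx₀ : x₀ ∈ E) :
    Tendsto (gapLeft E) (𝓝[≥] x₀) (𝓝[E] x₀) := by
  refine nhdsWithin_basis_ball.tendsto_right_iff.2 fun ε hε => ?_
  filter_upwards [Ico_mem_nhdsGE (lt_add_of_pos_right x₀ hε)] with x hx
  obtain ⟨hcE, hcx : gapLeft E x ≤ x⟩ := gapLeft_mem hE ⟨x₀, hx₀, hx.1⟩
  have := le_gapLeft hx₀ hx.1
  rw [Real.ball_eq_Ioo]
  exact ⟨⟨by linarith, by linarith [hx.2]⟩, hcE⟩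

lemma tendsto_gapRight_nhdsLE (hE : IsClosed E) {x₀ : ℝ} (hx₀ : x₀ ∈ E) :
    Tendsto (gapRight E) (𝓝[≤] x₀) (𝓝[E] x₀) := by
  refine nhdsWithin_basis_ball.tendsto_right_iff.2 fun ε hε => ?_
  filter_upwards [Ioc_mem_nhdsLE (sub_lt_self x₀ hε)] with x hx
  obtain ⟨hdE, hxd : x ≤ gapRight E x⟩ := gapRight_mem hE ⟨x₀, hx₀, hx.2⟩
  have := gapRight_le hx₀ hx.2
  rw [Real.ball_eq_Ioo]
  exact ⟨⟨by linarith [hx.1], by linarith⟩, hdE⟩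

lemma tendsto_gapRight_nhdsGE (hE : IsClosed E) {x₀ : ℝ}
    (hacc : ∀ y > x₀, (E ∩ Ioo x₀ y).Nonempty) :
    Tendsto (gapRight E) (𝓝[≥] x₀) (𝓝[E] x₀) := by
  refine nhdsWithin_basis_ball.tendsto_right_iff.2 fun ε hε => ?_
  obtain ⟨e, he, hx₀e, heε⟩ := hacc (x₀ + ε) (lt_add_of_pos_right x₀ hε)
  filter_upwards [Ico_mem_nhdsGE hx₀e] with x hx
  obtain ⟨hdE, hxd : x ≤ gapRight E x⟩ := gapRight_mem hE ⟨e, he, hx.2.le⟩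
  have := gapRight_le he hx.2.le
  rw [Real.ball_eq_Ioo]
  exact ⟨⟨by linarith [hx.1], by linarith⟩, hdE⟩

lemma tendsto_gapLeft_nhdsLE (hE : IsClosed E) {x₀ : ℝ}
    (hacc : ∀ y < x₀, (E ∩ Ioo y x₀).Nonempty) :
    Tendsto (gapLeft E) (𝓝[≤] x₀) (𝓝[E] x₀) := by
  refine nhdsWithin_basis_ball.tendsto_right_iff.2 fun ε hε => ?_
  obtain ⟨e, he, hεe, hex₀⟩ := hacc (x₀ - ε) (sub_lt_self x₀ hε)
  filter_upwards [Ioc_mem_nhdsLE hex₀] with x hx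
  obtain ⟨hcE, hcx : gapLeft E x ≤ x⟩ := gapLeft_mem hE ⟨e, he, hx.1.le⟩
  have := le_gapLeft he hx.1.le
  rw [Real.ball_eq_Ioo]
  exact ⟨⟨by linarith, by linarith [hx.2]⟩, hcE⟩

lemma tendsto_gapFill (hP : IsLocalPathChoice P) {x₀ : ℝ} (hf : ContinuousWithinAt f E x₀)
    {l : Filter ℝ} (hc : Tendsto (gapLeft E) l (𝓝[E] x₀))
    (hd : Tendsto (gapRight E) l (𝓝[E] x₀)) :
    Tendsto (gapFill P E f) l (𝓝 (f x₀)) :=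
  ((hP (f x₀)).comp ((hf.tendsto.comp hc).prodMk_nhds (hf.tendsto.comp hd))).of_smallSets
    (Eventually.of_forall (gapFill_mem_range P E f))

lemma continuousAt_gapFill_of_notMem (hE : IsClosed E) (hx : x ∉ E)
    (hl : (E ∩ Iic x).Nonempty) (hr : (E ∩ Ici x).Nonempty) :
    ContinuousAt (gapFill P E f) x := by
  obtain ⟨hcE, hcx⟩ := gapLeft_mem hE hl
  obtain ⟨hdE, hxd⟩ := gapRight_mem hE hr
  have hgap : x ∈ Ioo (gapLeft E x) (gapRight E x) :=
    ⟨hcx.lt_of_ne fun h => hx (h ▸ hcE), hxd.lt_of_ne fun h => hx (h ▸ hdE)⟩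
  exact ContinuousAt.congr (by fun_prop) ((gapFill_eqOn_Ioo hcE hdE
    (disjoint_Ioo_gapLeft_gapRight E x)).symm.eventuallyEq_of_mem (isOpen_Ioo.mem_nhds hgap))

lemma continuousWithinAt_Ici_gapFill (hP : IsLocalPathChoice P) (hE : IsClosed E)
    (hf : ContinuousOn f E) {x₀ : ℝ} (hx₀ : x₀ ∈ E) (hne : (E ∩ Ioi x₀).Nonempty) :
    ContinuousWithinAt (gapFill P E f) (Ici x₀) x₀ := by
  have hbdd : BddBelow (E ∩ Ioi x₀) := ⟨x₀, fun _ h => h.2.le⟩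
  set r := sInf (E ∩ Ioi x₀)
  have hr : r ∈ E :=
    hE.closure_subset (closure_mono inter_subset_left (csInf_mem_closure hne hbdd))
  rcases (le_csInf hne fun _ h => h.2.le : x₀ ≤ r).eq_or_lt with hacc | hgap
  · rw [ContinuousWithinAt, gapFill_of_mem hx₀]
    refine tendsto_gapFill hP (hf x₀ hx₀) (tendsto_gapLeft_nhdsGE hE hx₀)
      (tendsto_gapRight_nhdsGE hE fun y hy => ?_)
    obtain ⟨e, he, hey⟩ := exists_lt_of_csInf_lt hne (hacc ▸ hy)
    exact ⟨e, he.1, he.2, hey⟩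
  · have hdisj : Disjoint E (Ioo x₀ r) :=
      disjoint_left.2 fun e he hmem => (csInf_le hbdd ⟨he, hmem.1⟩).not_gt hmem.2
    rw [← continuousWithinAt_Ioi_iff_Ici]
    refine ContinuousWithinAt.congr_of_eventuallyEq (by fun_prop)
      ((gapFill_eqOn_Ioo hx₀ hr hdisj).eventuallyEq_of_mem (Ioo_mem_nhdsGT hgap)) ?_
    simp [gapFill_of_mem hx₀]

lemma continuousWithinAt_Iic_gapFill (hP : IsLocalPathChoice P) (hE : IsClosed E)
    (hf : ContinuousOn f E) {x₀ : ℝ} (hx₀ : x₀ ∈ E) (hne : (E ∩ Iio x₀).Nonempty) :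
    ContinuousWithinAt (gapFill P E f) (Iic x₀) x₀ := by
  have hbdd : BddAbove (E ∩ Iio x₀) := ⟨x₀, fun _ h => h.2.le⟩
  set l := sSup (E ∩ Iio x₀)
  have hl : l ∈ E :=
    hE.closure_subset (closure_mono inter_subset_left (csSup_mem_closure hne hbdd))
  rcases (csSup_le hne fun _ h => h.2.le : l ≤ x₀).eq_or_lt with hacc | hgap
  · rw [ContinuousWithinAt, gapFill_of_mem hx₀]
    refine tendsto_gapFill hP (hf x₀ hx₀) (tendsto_gapLeft_nhdsLE hE fun y hy => ?_)
      (tendsto_gapRight_nhdsLE hE hx₀)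
    obtain ⟨e, he, hye⟩ := exists_lt_of_lt_csSup hne (hacc.symm ▸ hy)
    exact ⟨e, he.1, hye, he.2⟩
  · have hdisj : Disjoint E (Ioo l x₀) :=
      disjoint_left.2 fun e he hmem => (le_csSup hbdd ⟨he, hmem.2⟩).not_gt hmem.1
    rw [← continuousWithinAt_Iio_iff_Iic]
    refine ContinuousWithinAt.congr_of_eventuallyEq (by fun_prop)
      ((gapFill_eqOn_Ioo hl hx₀ hdisj).eventuallyEq_of_mem (Ioo_mem_nhdsLT hgap)) ?_
    have hlx₀ : x₀ - l ≠ 0 := (sub_pos.2 hgap).ne'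
    simp [gapFill_of_mem hx₀, hlx₀]

theorem continuousOn_gapFill (hP : IsLocalPathChoice P) (hE : IsClosed E)
    (hf : ContinuousOn f E) {a b : ℝ} (ha : a ∈ E) (hb : b ∈ E) :
    ContinuousOn (gapFill P E f) (Icc a b) := by
  intro x hx
  by_cases hxE : x ∈ E
  · have hleft : ContinuousWithinAt (gapFill P E f) (Icc a x) x := by
      rcases hx.1.eq_or_lt with rfl | hax
      · simpa only [Icc_self] using continuousWithinAt_singleton
      · exact (continuousWithinAt_Iic_gapFill hP hE hf hxE ⟨a, ha, hax⟩).mono Icc_subset_Iic_self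
    have hright : ContinuousWithinAt (gapFill P E f) (Icc x b) x := by
      rcases hx.2.eq_or_lt with rfl | hxb
      · simpa only [Icc_self] using continuousWithinAt_singleton
      · exact (continuousWithinAt_Ici_gapFill hP hE hf hxE ⟨b, hb, hxb⟩).mono Icc_subset_Ici_self
    simpa only [Icc_union_Icc_eq_Icc hx.1 hx.2] using hleft.union hright
  · exact (continuousAt_gapFill_of_notMem hE hxE ⟨a, ha, hx.1⟩ ⟨b, hb, hx.2⟩).continuousWithinAt

theorem exists_continuous_extension_of_isCompact [Nonempty X] (hP : IsLocalPathChoice P)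
    (hE : IsCompact E) (hf : ContinuousOn f E) : ∃ g : ℝ → X, Continuous g ∧ EqOn g f E := by
  rcases E.eq_empty_or_nonempty with rfl | hne
  · exact ⟨fun _ => Classical.arbitrary X, continuous_const, eqOn_empty _ _⟩
  have hab : sInf E ≤ sSup E := csInf_le_csSup hne hE.bddBelow hE.bddAbove
  have hcont := continuousOn_gapFill hP hE.isClosed hf (hE.sInf_mem hne) (hE.sSup_mem hne)
  refine ⟨IccExtend hab ((Icc _ _).domRestrict (gapFill P E f)),
    (continuousOn_iff_continuous_domRestrict.1 hcont).Icc_extend', fun x hx => ?_⟩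
  rw [IccExtend_of_mem hab _ (mem_Icc.2 ⟨csInf_le hE.bddBelow hx, le_csSup hE.bddAbove hx⟩),
    domRestrict_apply, gapFill_of_mem hx]

end GapFill

theorem extension_from_closed_subset_of_unit_interval_general
    {K : Type*} [MetricSpace K] [ConnectedSpace K]
    [LocallyPathConnectedSpace K]
    (E : Set ℝ) (hEsub : E ⊆ Set.Icc (0 : ℝ) 1) (hEclosed : IsClosed E)
    (f : ℝ → K) (hf : ContinuousOn f E) :
    ∃ g : ℝ → K, ContinuousOn g (Set.Icc (0 : ℝ) 1) ∧ Set.EqOn g f E := by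
  have : PathConnectedSpace K := pathConnectedSpace_iff_connectedSpace.2 ‹_›
  obtain ⟨P, hP⟩ := exists_isLocalPathChoice (X := K)
  obtain ⟨g, hg, hgf⟩ := exists_continuous_extension_of_isCompact hP
    (isCompact_Icc.of_isClosed_subset hEclosed hEsub) hf
  exact ⟨g, hg.continuousOn, hgf⟩

/-- If `K` is a compact, connected, locally path-connected metric space, then every
continuous function from a closed subset `E` of `[0,1]` into `K` extends to a
continuous function from `[0,1]` into `K`. -/
theorem extension_from_closed_subset_of_unit_interval
    {K : Type*} [MetricSpace K] [CompactSpace K] [ConnectedSpace K]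
    [LocallyPathConnectedSpace K]
    (E : Set ℝ) (hEsub : E ⊆ Set.Icc (0 : ℝ) 1) (hEclosed : IsClosed E)
    (f : ℝ → K) (hf : ContinuousOn f E) :
    ∃ g : ℝ → K, ContinuousOn g (Set.Icc (0 : ℝ) 1) ∧ Set.EqOn g f E :=
  extension_from_closed_subset_of_unit_interval_general E hEsub hEclosed f hf
end

section
/- If a compact metric space K is the continuous image of a product ∏_{i∈I} [0,1] (with product topology) over an arbitrary index set I, then K is the continuous image of ∏_{i∈J} [0,1] for some countable subset J ⊆ I, and hence a continuous image of [0,1]. -/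
open Set Filter Function Topology Cardinal

noncomputable section CubeAux

local notation "Q" => Set.Icc (0:ℝ) 1

def qzero : Set.Icc (0:ℝ) 1 := ⟨0, by norm_num⟩

/-- binary digit series -/
def dig (x : ℕ → Bool) (n : ℕ) : ℝ := if x n then (2⁻¹:ℝ)^(n+1) else 0

lemma dig_nonneg (x : ℕ → Bool) (n : ℕ) : 0 ≤ dig x n := by
  unfold dig; split <;> positivity

lemma dig_le (x : ℕ → Bool) (n : ℕ) : dig x n ≤ (2⁻¹:ℝ)^(n+1) := by
  unfold dig; split
  · exact le_refl _
  · positivity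

lemma summable_geo2 : Summable (fun n : ℕ => ((2:ℝ)⁻¹)^(n+1)) := by
  simpa [pow_succ'] using (summable_geometric_of_lt_one (by norm_num) (by norm_num : (2:ℝ)⁻¹ < 1)).mul_left (2:ℝ)⁻¹

lemma tsum_geo2 : ∑' n : ℕ, ((2:ℝ)⁻¹)^(n+1) = 1 := by
  have h : ∑' n : ℕ, ((2:ℝ)⁻¹)^n = 2 := by
    rw [tsum_geometric_of_lt_one (by norm_num) (by norm_num)]
    norm_num
  calc ∑' n : ℕ, ((2:ℝ)⁻¹)^(n+1) = ∑' n : ℕ, (2:ℝ)⁻¹ * ((2:ℝ)⁻¹)^n := by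
        congr 1; ext n; rw [pow_succ']
    _ = (2:ℝ)⁻¹ * ∑' n : ℕ, ((2:ℝ)⁻¹)^n := tsum_mul_left
    _ = 1 := by rw [h]; norm_num

lemma summable_dig (x : ℕ → Bool) : Summable (dig x) :=
  Summable.of_nonneg_of_le (dig_nonneg x) (dig_le x) summable_geo2

def c2 (x : ℕ → Bool) : ℝ := ∑' n, dig x n

lemma c2_mem (x : ℕ → Bool) : c2 x ∈ Set.Icc (0:ℝ) 1 := by
  constructor
  · exact tsum_nonneg (dig_nonneg x)
  · calc c2 x ≤ ∑' n : ℕ, ((2:ℝ)⁻¹)^(n+1) :=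
        Summable.tsum_le_tsum (dig_le x) (summable_dig x) summable_geo2
    _ = 1 := tsum_geo2

lemma c2_continuous : Continuous c2 := by
  apply continuous_tsum (u := fun n : ℕ => ((2:ℝ)⁻¹)^(n+1))
  · intro n
    exact (continuous_of_discreteTopology (f := fun b : Bool => if b then ((2⁻¹:ℝ))^(n+1) else 0)).comp (continuous_apply n)
  · exact summable_geo2
  · intro n x
    rw [Real.norm_eq_abs, abs_of_nonneg (dig_nonneg x n)]
    exact dig_le x n

lemma c2_surj : ∀ r ∈ Set.Icc (0:ℝ) 1, ∃ x : ℕ → Bool, c2 x = r := by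
  intro r hr
  classical
  let s : ℕ → ℝ := fun n => Nat.rec 0 (fun n sn => if sn + (2⁻¹:ℝ)^(n+1) ≤ r then sn + (2⁻¹:ℝ)^(n+1) else sn) n
  have hs0 : s 0 = 0 := rfl
  have hsucc : ∀ n, s (n+1) = if s n + (2⁻¹:ℝ)^(n+1) ≤ r then s n + (2⁻¹:ℝ)^(n+1) else s n := fun n => rfl
  let x : ℕ → Bool := fun n => decide (s n + (2⁻¹:ℝ)^(n+1) ≤ r)
  have hinv : ∀ n, s n ≤ r ∧ r ≤ s n + (2⁻¹:ℝ)^n := by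
    intro n
    induction n with
    | zero => simpa [hs0] using hr
    | succ n ih =>
      rw [hsucc]
      by_cases h : s n + (2⁻¹:ℝ)^(n+1) ≤ r
      · rw [if_pos h]
        refine ⟨h, ?_⟩
        have : s n + (2⁻¹:ℝ)^(n+1) + (2⁻¹:ℝ)^(n+1) = s n + (2⁻¹:ℝ)^n := by ring_nf
        rw [this]
        exact ih.2
      · rw [if_neg h]
        exact ⟨ih.1, by linarith [ih.2, not_le.1 h]⟩
  have hpartial : ∀ n, ∑ i ∈ Finset.range n, dig x i = s n := by
    intro n
    induction n with
    | zero => simp [hs0]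
    | succ n ih =>
      rw [Finset.sum_range_succ, ih, hsucc]
      unfold dig
      have hx : (x n = true) ↔ (s n + (2⁻¹:ℝ)^(n+1) ≤ r) := decide_eq_true_iff
      by_cases h : s n + (2⁻¹:ℝ)^(n+1) ≤ r
      · rw [if_pos (hx.2 h), if_pos h]
      · rw [if_neg (fun hc => h (hx.1 hc)), if_neg h, add_zero]
  refine ⟨x, ?_⟩
  have hsum : HasSum (dig x) r := by
    rw [hasSum_iff_tendsto_nat_of_summable_norm]
    · have heq : (fun n => ∑ i ∈ Finset.range n, dig x i) = s := funext hpartial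
      rw [heq]
      apply tendsto_of_tendsto_of_tendsto_of_le_of_le
        (g := fun n : ℕ => r - (2⁻¹:ℝ)^n) (h := fun _ : ℕ => r)
      · simpa using tendsto_const_nhds.sub (tendsto_pow_atTop_nhds_zero_of_lt_one (by norm_num : (0:ℝ) ≤ 2⁻¹) (by norm_num))
      · exact tendsto_const_nhds
      · intro n; linarith [(hinv n).2]
      · intro n; exact (hinv n).1
    · refine Summable.of_nonneg_of_le (fun n => norm_nonneg _) (fun n => ?_) summable_geo2
      rw [Real.norm_eq_abs, abs_of_nonneg (dig_nonneg x n)]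
      exact dig_le x n
  exact hsum.tsum_eq


/-- scaled Cantor function: a topological embedding of Cantor space into `[0,1]`. -/
def cemb (x : ℕ → Bool) : ℝ := 2/3 * cantorFunction 3⁻¹ x

lemma caux_nonneg (x : ℕ → Bool) (n : ℕ) : 0 ≤ cantorFunctionAux (3⁻¹:ℝ) x n :=
  cantorFunctionAux_nonneg (by norm_num)

lemma caux_le (x : ℕ → Bool) (n : ℕ) : cantorFunctionAux (3⁻¹:ℝ) x n ≤ (3⁻¹:ℝ)^n := by
  unfold cantorFunctionAux
  cases h : x n <;> simp [h]
  all_goals positivity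

lemma summable_geo3 : Summable (fun n : ℕ => ((3:ℝ)⁻¹)^n) :=
  summable_geometric_of_lt_one (by norm_num) (by norm_num)

lemma cemb_mem (x : ℕ → Bool) : cemb x ∈ Set.Icc (0:ℝ) 1 := by
  have h0 : 0 ≤ cantorFunction 3⁻¹ x := tsum_nonneg (caux_nonneg x)
  have h1 : cantorFunction 3⁻¹ x ≤ 3/2 := by
    calc cantorFunction 3⁻¹ x ≤ ∑' n : ℕ, ((3:ℝ)⁻¹)^n :=
        Summable.tsum_le_tsum (caux_le x) (summable_cantor_function x (by norm_num) (by norm_num)) summable_geo3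
      _ = 3/2 := by rw [tsum_geometric_of_lt_one (by norm_num) (by norm_num)]; norm_num
  constructor
  · unfold cemb; positivity
  · unfold cemb; linarith

lemma cemb_continuous : Continuous cemb := by
  apply Continuous.mul continuous_const
  apply continuous_tsum (u := fun n : ℕ => ((3:ℝ)⁻¹)^n)
  · intro n
    exact (continuous_of_discreteTopology (f := fun b : Bool => cond b ((3⁻¹:ℝ)^n) 0)).comp (continuous_apply n)
  · exact summable_geo3
  · intro n x
    rw [Real.norm_eq_abs, abs_of_nonneg (caux_nonneg x n)]
    exact caux_le x n

lemma cemb_injective : Function.Injective cemb := by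
  intro a b h
  apply cantorFunction_injective (c := (3:ℝ)⁻¹) (by norm_num) (by norm_num)
  unfold cemb at h
  linarith

/-- Cantor space into the unit interval as a subtype. -/
def cembQ (x : ℕ → Bool) : Set.Icc (0:ℝ) 1 := ⟨cemb x, cemb_mem x⟩

lemma cembQ_closedEmbedding : Topology.IsClosedEmbedding cembQ := by
  apply Continuous.isClosedEmbedding
  · exact cemb_continuous.subtype_mk _
  · intro a b h
    exact cemb_injective (congrArg Subtype.val h)

/-- Cantor space onto the Hilbert cube. -/
def F0 (x : ℕ → Bool) : ℕ → Set.Icc (0:ℝ) 1 :=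
  fun n => ⟨c2 (fun m => x (Nat.pair n m)), c2_mem _⟩

lemma F0_continuous : Continuous F0 := by
  apply continuous_pi
  intro n
  apply Continuous.subtype_mk
  exact c2_continuous.comp (continuous_pi fun m => continuous_apply _)

lemma F0_surjective : Function.Surjective F0 := by
  intro y
  have : ∀ n : ℕ, ∃ z : ℕ → Bool, c2 z = (y n : ℝ) := fun n => c2_surj _ (y n).2
  choose z hz using this
  refine ⟨fun k => z k.unpair.1 k.unpair.2, ?_⟩
  funext n
  apply Subtype.ext
  simp only [F0]
  rw [show (fun m => z (Nat.pair n m).unpair.1 (Nat.pair n m).unpair.2) = z n from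
    funext fun m => by rw [Nat.unpair_pair]]
  exact hz n

instance : TietzeExtension (Set.Icc (0:ℝ) 1) :=
  .of_retract ⟨Subtype.val, continuous_subtype_val⟩
    ⟨Set.projIcc 0 1 zero_le_one, continuous_projIcc⟩
    (by ext x; simp [Set.projIcc_val])

/-- space-filling curve onto the Hilbert cube, from Tietze extension. -/
theorem exists_hilbert_curve :
    ∃ g : Set.Icc (0:ℝ) 1 → (ℕ → Set.Icc (0:ℝ) 1), Continuous g ∧ Function.Surjective g := by
  obtain ⟨g, hg⟩ := ContinuousMap.exists_extension' cembQ_closedEmbedding ⟨F0, F0_continuous⟩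
  refine ⟨g, g.continuous, fun y => ?_⟩
  obtain ⟨x, hx⟩ := F0_surjective y
  exact ⟨cembQ x, by rw [show g (cembQ x) = F0 x from congrFun hg x, hx]⟩

end CubeAux

lemma finite_coord_approx {K : Type*} [MetricSpace K] {I : Type*}
    (β : (I → Set.Icc (0:ℝ) 1) → K) (hc : Continuous β) {ε : ℝ} (hε : 0 < ε) :
    ∃ F : Finset I, ∀ x y : I → Set.Icc (0:ℝ) 1,
      (∀ i ∈ F, x i = y i) → dist (β x) (β y) ≤ ε := by
  classical
  have hu : UniformContinuous β := CompactSpace.uniformContinuous_of_continuous hc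
  have h1 : {p : K × K | dist p.1 p.2 < ε} ∈ uniformity K := Metric.dist_mem_uniformity hε
  have h2 : (Prod.map β β) ⁻¹' {p : K × K | dist p.1 p.2 < ε} ∈
      uniformity (I → Set.Icc (0:ℝ) 1) := hu h1
  rw [Pi.uniformity, Filter.mem_iInf] at h2
  obtain ⟨S, hSfin, V, hV, hEq⟩ := h2
  refine ⟨hSfin.toFinset, fun x y hxy => ?_⟩
  have hmem : (x, y) ∈ (Prod.map β β) ⁻¹' {p : K × K | dist p.1 p.2 < ε} := by
    rw [hEq]
    refine Set.mem_iInter.2 fun i => ?_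
    rcases Filter.mem_comap.1 (hV i) with ⟨U, hU, hUV⟩
    apply hUV
    have hxyi : x (i : I) = y (i : I) := hxy i (hSfin.mem_toFinset.2 i.2)
    simp only [Set.mem_preimage, hxyi]
    exact refl_mem_uniformity hU
  exact le_of_lt hmem

/-- If a compact metric space `K` is a continuous image of a product `∏_{i ∈ I} [0,1]`
(arbitrary index set `I`, product topology), then `K` is already the image of the subcube
supported on a countable subset `J ⊆ I`, hence a continuous image of `∏_{i ∈ J} [0,1]`
for a countable `J`, and therefore a continuous image of `[0,1]`. -/
theorem continuous_image_of_cube_countable_reduction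
    {K : Type*} [MetricSpace K] [CompactSpace K]
    {I : Type*} (β : (I → Set.Icc (0 : ℝ) 1) → K)
    (hβcont : Continuous β) (hβsurj : Function.Surjective β) :
    (∃ J : Set I, J.Countable ∧
      Set.SurjOn β {x : I → Set.Icc (0 : ℝ) 1 |
        ∀ i ∉ J, x i = ⟨0, by norm_num⟩} Set.univ) ∧
    ∃ g : Set.Icc (0 : ℝ) 1 → K, Continuous g ∧ Function.Surjective g := by
  classical
  have key : ∀ n : ℕ, ∃ F : Finset I, ∀ x y : I → Set.Icc (0:ℝ) 1,
      (∀ i ∈ F, x i = y i) → dist (β x) (β y) ≤ 1 / ((n : ℝ) + 1) :=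
    fun n => finite_coord_approx β hβcont (by positivity)
  choose F hF using key
  set J : Set I := ⋃ n, ((F n : Set I)) with hJdef
  have hJc : J.Countable := Set.countable_iUnion fun n => (F n).countable_toSet
  have hsurj : Set.SurjOn β {x : I → Set.Icc (0 : ℝ) 1 |
      ∀ i ∉ J, x i = ⟨0, by norm_num⟩} Set.univ := by
    intro k _
    obtain ⟨x, hx⟩ := hβsurj k
    set y : I → Set.Icc (0:ℝ) 1 := fun i => if i ∈ J then x i else ⟨0, by norm_num⟩ with hy
    have hyS : y ∈ {x : I → Set.Icc (0 : ℝ) 1 | ∀ i ∉ J, x i = ⟨0, by norm_num⟩} :=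
      fun i hi => if_neg hi
    have hdist : ∀ n : ℕ, dist (β x) (β y) ≤ 1 / ((n : ℝ) + 1) := by
      intro n
      apply hF n x y
      intro i hi
      have hiJ : i ∈ J := Set.mem_iUnion.2 ⟨n, hi⟩
      exact (if_pos hiJ).symm
    have h0 : dist (β x) (β y) ≤ 0 :=
      ge_of_tendsto' tendsto_one_div_add_atTop_nhds_zero_nat hdist
    have : β y = β x := (dist_le_zero.1 h0).symm
    exact ⟨y, hyS, this.trans hx⟩
  refine ⟨⟨J, hJc, hsurj⟩, ?_⟩
  obtain ⟨g0, hg0c, hg0s⟩ := exists_hilbert_curve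
  rcases J.eq_empty_or_nonempty with hJe | hJne
  · refine ⟨fun _ => β (fun _ => ⟨0, by norm_num⟩), continuous_const, fun k => ?_⟩
    obtain ⟨x, hxS, hxk⟩ := hsurj (Set.mem_univ k)
    have hx0 : x = fun _ => (⟨0, by norm_num⟩ : Set.Icc (0:ℝ) 1) :=
      funext fun i => hxS i (by simp [hJe])
    exact ⟨⟨0, by norm_num⟩, by rw [← hxk, hx0]⟩
  · obtain ⟨f, hfr⟩ := hJc.exists_eq_range hJne
    set G : (ℕ → Set.Icc (0:ℝ) 1) → (I → Set.Icc (0:ℝ) 1) :=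
      fun y i => if i ∈ J then y (Function.invFun f i) else ⟨0, by norm_num⟩ with hG
    have Gcont : Continuous G := by
      apply continuous_pi
      intro i
      by_cases h : i ∈ J
      · simpa [hG, h] using continuous_apply (Function.invFun f i)
      · simpa [hG, h] using (continuous_const :
          Continuous fun _ : ℕ → Set.Icc (0:ℝ) 1 => (⟨0, by norm_num⟩ : Set.Icc (0:ℝ) 1))
    have hGsurj : ∀ x ∈ {x : I → Set.Icc (0 : ℝ) 1 | ∀ i ∉ J, x i = ⟨0, by norm_num⟩},
        ∃ y, G y = x := by
      intro x hx
      refine ⟨fun n => x (f n), funext fun i => ?_⟩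
      by_cases h : i ∈ J
      · have hfi : f (Function.invFun f i) = i :=
          Function.invFun_eq (by rw [hfr] at h; exact h)
        simp only [hG, if_pos h, hfi]
      · simp only [hG, if_neg h]
        exact (hx i h).symm
    refine ⟨β ∘ G ∘ g0, (hβcont.comp Gcont).comp hg0c, fun k => ?_⟩
    obtain ⟨x, hxS, hxk⟩ := hsurj (Set.mem_univ k)
    obtain ⟨y, hy⟩ := hGsurj x hxS
    obtain ⟨t, ht⟩ := hg0s y
    exact ⟨t, by simp only [Function.comp_apply, ht, hy, hxk]⟩
end

section
/- A compact metric space K is a continuous image of [0,1] if and only if K is nonempty, connected, and locally path-connected. -/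
/-!
Necessity: a continuous surjection from the compact space `[0,1]` onto the Hausdorff space `K`
is a quotient map, and connectedness and local path-connectedness pass to quotients.

Sufficiency: by compactness and a Lebesgue number, `K` is uniformly locally path-connected:
`δ`-close points are joined by paths inside `ε`-balls. Starting from a constant map, build maps
`fₙ : [0,1] → K` whose images are `δₙ`-dense. To pass from `fₙ` to `fₙ₊₁`, take a finite
`δₙ₊₁`-net; for each net point `s` choose a short interval on which `fₙ` is `δₙ`-close to `s`,
these intervals pairwise disjoint, and splice in a path running out to `s` and back. Since the
intervals are disjoint, `fₙ₊₁` stays uniformly within `2⁻ⁿ + δₙ` of `fₙ`, so the `fₙ` converge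
uniformly; the limit has dense and compact, hence full, image.
-/

open Set Metric Filter Topology Function unitInterval

theorem Finite.exists_injective_forall_mem {ι α : Type*} [Finite ι] {S : ι → Set α}
    (hS : ∀ i, (S i).Infinite) : ∃ τ : ι → α, Injective τ ∧ ∀ i, τ i ∈ S i := by
  classical
  have := Fintype.ofFinite ι
  suffices ∀ T : Finset ι, ∃ τ : ι → α, InjOn τ T ∧ ∀ i ∈ T, τ i ∈ S i by
    obtain ⟨τ, hτ, hτS⟩ := this Finset.univ
    exact ⟨τ, injOn_univ.1 (by simpa using hτ), fun i => hτS i (Finset.mem_univ i)⟩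
  intro T
  induction T using Finset.induction_on with
  | empty => exact ⟨fun i => (hS i).nonempty.some, by simp, by simp⟩
  | insert j T hj ih =>
    obtain ⟨τ, hτ, hτS⟩ := ih
    obtain ⟨x, hxS, hxτ⟩ := ((hS j).sdiff (T.finite_toSet.image τ)).nonempty
    have hτ' : EqOn (update τ j x) τ T := fun i hi =>
      update_of_ne (ne_of_mem_of_not_mem hi hj) _ _
    refine ⟨update τ j x, ?_, fun i hi => ?_⟩
    · rw [Finset.coe_insert, injOn_insert (by simpa using hj), hτ'.image_eq, update_self]
      exact ⟨hτ.congr hτ'.symm, hxτ⟩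
    · rcases Finset.mem_insert.1 hi with rfl | hi
      · rwa [update_self]
      · rw [hτ' hi]; exact hτS i hi

theorem unitInterval.exists_lt_and_Icc_subset_of_mem_nhds {x : I} {s : Set I} (hs : s ∈ 𝓝 x) :
    ∃ a b : I, a < b ∧ Icc a b ⊆ s := by
  obtain ⟨ε, hε, hball⟩ := Metric.mem_nhds_iff.1 hs
  obtain ⟨y, hyx, hy⟩ :=
    Filter.nonempty_of_mem (inter_mem_nhdsWithin {x}ᶜ (ball_mem_nhds x hε))
  refine ⟨min x y, max x y, min_lt_max.2 (Ne.symm hyx), fun z hz => hball ?_⟩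
  have hyx' : |(y : ℝ) - x| < ε := hy
  show |(z : ℝ) - x| < ε
  rw [abs_lt] at hyx' ⊢
  rcases le_total x y with h | h
  · rw [min_eq_left h, max_eq_right h] at hz
    have h1 : (x : ℝ) ≤ z := hz.1
    have h2 : (z : ℝ) ≤ y := hz.2
    constructor <;> linarith
  · rw [min_eq_right h, max_eq_left h] at hz
    have h1 : (y : ℝ) ≤ z := hz.1
    have h2 : (z : ℝ) ≤ x := hz.2
    constructor <;> linarith

theorem unitInterval.exists_pairwise_disjoint_Icc_subset {ι : Type*} [Finite ι] {U : ι → Set I}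
    (hU : ∀ i, IsOpen (U i)) (hne : ∀ i, (U i).Nonempty) :
    ∃ a b : ι → I, (∀ i, a i < b i ∧ Icc (a i) (b i) ⊆ U i) ∧
      Pairwise (Disjoint on fun i => Icc (a i) (b i)) := by
  obtain ⟨τ, hτ, hτU⟩ := Finite.exists_injective_forall_mem fun i =>
    infinite_of_mem_nhds _ ((hU i).mem_nhds (hne i).some_mem)
  obtain ⟨V, hV, hVd⟩ :=
    ((pairwise_disjoint_nhds (X := I)).comp_of_injective hτ).exists_mem_filter_of_disjoint
  choose a b hab hsub using fun i =>
    exists_lt_and_Icc_subset_of_mem_nhds (inter_mem ((hU i).mem_nhds (hτU i)) (hV i))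
  exact ⟨a, b, fun i => ⟨hab i, (hsub i).trans inter_subset_left⟩,
    fun i j hij => (hVd hij).mono ((hsub i).trans inter_subset_right)
      ((hsub j).trans inter_subset_right)⟩

theorem ContinuousMap.exists_splice_path {X : Type*} [TopologicalSpace X] (f : C(I, X))
    {a b : I} (hab : a < b) (γ : Path (f a) (f b)) :
    ∃ g : C(I, X), EqOn g f (Icc a b)ᶜ ∧ g '' Icc a b = range γ := by
  classical
  have hab' : (a : ℝ) < b := hab
  set φ : I → ℝ := fun t => (t - a) / (b - a)
  have hba : (b : ℝ) - a ≠ 0 := (sub_pos.2 hab').ne'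
  have hφa : φ a = 0 := by simp [φ]
  have hφb : φ b = 1 := div_self hba
  set g : I → X := fun t => if t ≤ a then f t else if t ≤ b then γ.extend (φ t) else f t
  have hg : ∀ t ∈ Icc a b, g t = γ.extend (φ t) := by
    rintro t ⟨hat, htb⟩
    by_cases hta : t ≤ a
    · obtain rfl := le_antisymm hta hat
      simp [g, hφa]
    · simp [g, hta, htb]
  have hcont : Continuous g := by
    refine Continuous.if_le f.continuous ?_ continuous_id continuous_const fun t ht => ?_
    · refine Continuous.if_le (γ.continuous_extend.comp (by fun_prop)) f.continuous
        continuous_id continuous_const fun t ht => ?_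
      simp [ht, hφb]
    · simp [ht, hab.le, hφa]
  refine ⟨⟨g, hcont⟩, fun t ht => ?_, ?_⟩
  · simp only [mem_compl_iff, mem_Icc, not_and_or, not_le] at ht
    rcases ht with ht | ht
    · simp [g, ht.le]
    · simp [g, ht, (hab.trans ht).not_ge]
  · have hsurj : Icc (0 : ℝ) 1 ⊆ φ '' Icc a b := by
      rintro u ⟨hu0, hu1⟩
      have ht : (a : ℝ) + u * (b - a) ∈ Icc (0 : ℝ) 1 :=
        ⟨by nlinarith [a.2.1], by nlinarith [b.2.2]⟩
      refine ⟨⟨_, ht⟩, ⟨?_, ?_⟩, ?_⟩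
      · show (a : ℝ) ≤ _; nlinarith
      · show _ ≤ (b : ℝ); nlinarith
      · simp only [φ, add_sub_cancel_left, mul_div_assoc, div_self hba, mul_one]
    change g '' Icc a b = range γ
    rw [← γ.image_extend_of_subset hsurj, image_image]
    exact image_congr hg

theorem ContinuousMap.exists_splice_paths {X ι : Type*} [TopologicalSpace X] [Finite ι]
    (f : C(I, X)) {a b : ι → I} (hab : ∀ i, a i < b i)
    (hdisj : Pairwise (Disjoint on fun i => Icc (a i) (b i)))
    (γ : ∀ i, Path (f (a i)) (f (b i))) :
    ∃ g : C(I, X), EqOn g f (⋃ i, Icc (a i) (b i))ᶜ ∧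
      ∀ i, g '' Icc (a i) (b i) = range (γ i) := by
  classical
  have := Fintype.ofFinite ι
  suffices ∀ T : Finset ι, ∃ g : C(I, X), EqOn g f (⋃ i ∈ T, Icc (a i) (b i))ᶜ ∧
      ∀ i ∈ T, g '' Icc (a i) (b i) = range (γ i) by
    simpa using this Finset.univ
  intro T
  induction T using Finset.induction_on with
  | empty => exact ⟨f, fun _ _ => rfl, by simp⟩
  | insert j T hj ih =>
    obtain ⟨g, hgf, hgγ⟩ := ih
    have hjT : ∀ i ∈ T, Disjoint (Icc (a j) (b j)) (Icc (a i) (b i)) :=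
      fun i hi => hdisj (ne_of_mem_of_not_mem hi hj).symm
    have hgj : EqOn g f (Icc (a j) (b j)) := fun t ht => hgf <| by
      simp only [mem_compl_iff, mem_iUnion, not_exists]
      exact fun i hi hti => (hjT i hi).ne_of_mem ht hti rfl
    obtain ⟨g', hg'g, hg'γ⟩ := g.exists_splice_path (hab j)
      ((γ j).cast (hgj (left_mem_Icc.2 (hab j).le)) (hgj (right_mem_Icc.2 (hab j).le)))
    refine ⟨g', fun t ht => ?_, fun i hi => ?_⟩
    · simp only [Finset.set_biUnion_insert, compl_union, mem_inter_iff] at ht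
      rw [hg'g ht.1, hgf ht.2]
    · rcases Finset.mem_insert.1 hi with rfl | hi
      · exact hg'γ
      · rw [← hgγ i hi]
        exact EqOn.image_eq fun t ht => hg'g fun htj => (hjT i hi).ne_of_mem htj ht rfl

def JoinedInBalls (K : Type*) [PseudoMetricSpace K] (δ ε : ℝ) : Prop :=
  ∀ x y : K, dist x y < δ → JoinedIn (closedBall y ε) x y

section

variable {K : Type*} [PseudoMetricSpace K]

theorem exists_joinedInBalls [CompactSpace K] [LocallyPathConnectedSpace K] {ε : ℝ}
    (hε : 0 < ε) : ∃ δ, 0 < δ ∧ δ ≤ ε ∧ JoinedInBalls K δ ε := by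
  have hU : ∀ x : K, ∃ U, IsOpen U ∧ x ∈ U ∧ IsPathConnected U ∧ U ⊆ ball x (ε / 2) :=
    fun x => by simpa [and_assoc] using
      (isOpen_isPathConnected_basis x).mem_iff.1 (ball_mem_nhds x (half_pos hε))
  choose U hUo hxU hUpc hUsub using hU
  obtain ⟨δ, hδ, hδU⟩ := lebesgue_number_lemma_of_metric isCompact_univ hUo
    fun x _ => mem_iUnion.2 ⟨x, hxU x⟩
  refine ⟨min δ ε, lt_min hδ hε, min_le_right _ _, fun x y hxy => ?_⟩
  obtain ⟨z, hz⟩ := hδU y (mem_univ y)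
  have hy : y ∈ U z := hz (mem_ball_self hδ)
  refine ((hUpc z).joinedIn x (hz (hxy.trans_le (min_le_left _ _))) y hy).mono fun w hw => ?_
  have hwz := hUsub z hw
  have hyz := hUsub z hy
  rw [mem_ball] at hwz hyz
  rw [mem_closedBall]
  linarith [dist_triangle_right w y z]

theorem joinedInBalls_diam [PathConnectedSpace K] [BoundedSpace K] (δ : ℝ) :
    JoinedInBalls K δ (diam (univ : Set K)) := fun x y _ =>
  (joinedIn_univ.2 (PathConnectedSpace.joined x y)).mono fun w _ =>
    dist_le_diam_of_mem (Bornology.isBounded_univ.2 ‹_›) (mem_univ w) (mem_univ y)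

theorem ContinuousMap.exists_dist_le_forall_exists_dist_lt [CompactSpace K] {ρ c θ : ℝ}
    (hc : 0 ≤ c) (hθ : 0 < θ) (hK : JoinedInBalls K ρ c) (f : C(I, K))
    (hf : ∀ x, ∃ t, dist x (f t) < ρ) :
    ∃ g : C(I, K), (∀ x, ∃ t, dist x (g t) < θ) ∧ dist g f ≤ c + ρ := by
  have hρ : 0 < ρ := let ⟨_, ht⟩ := hf (f 0); dist_nonneg.trans_lt ht
  obtain ⟨T, -, hT, hcover⟩ := finite_cover_balls_of_compact (isCompact_univ (X := K)) hθ
  have := hT.to_subtype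
  obtain ⟨a, b, hab, hdisj⟩ := exists_pairwise_disjoint_Icc_subset
    (U := fun s : T => {t | dist (f t) s < ρ}) (fun s => isOpen_lt (by fun_prop) continuous_const)
    fun s => let ⟨t, ht⟩ := hf s; ⟨t, by rwa [dist_comm] at ht⟩
  have hjoin : ∀ s : T, ∀ t ∈ Icc (a s) (b s), JoinedIn (closedBall (s : K) c) (f t) s :=
    fun s t ht => hK _ _ ((hab s).2 ht)
  let γ : ∀ s : T, Path (f (a s)) (f (b s)) := fun s =>
    (hjoin s _ (left_mem_Icc.2 (hab s).1.le)).somePath.trans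
      (hjoin s _ (right_mem_Icc.2 (hab s).1.le)).somePath.symm
  have hγ : ∀ s : T, range (γ s) ⊆ closedBall (s : K) c ∧ (s : K) ∈ range (γ s) := fun s => by
    simp only [γ, Path.trans_range, Path.symm_range, union_subset_iff, range_subset_iff]
    exact ⟨⟨JoinedIn.somePath_mem _, JoinedIn.somePath_mem _⟩, Or.inl ⟨1, Path.target _⟩⟩
  obtain ⟨g, hgf, hgγ⟩ := f.exists_splice_paths (fun s => (hab s).1) hdisj γ
  simp only [← hgγ] at hγ
  refine ⟨g, fun x => ?_, (dist_le_iff_of_nonempty).2 fun t => ?_⟩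
  · obtain ⟨s, hs, hxs⟩ := mem_iUnion₂.1 (hcover (mem_univ x))
    obtain ⟨t, -, ht⟩ := (hγ ⟨s, hs⟩).2
    exact ⟨t, by rwa [ht]⟩
  · by_cases ht : t ∈ ⋃ s, Icc (a s) (b s)
    · obtain ⟨s, hts⟩ := mem_iUnion.1 ht
      have h1 : g t ∈ closedBall (s : K) c := (hγ s).1 (mem_image_of_mem g hts)
      have h2 : dist (f t) s < ρ := (hab s).2 hts
      calc dist (g t) (f t) ≤ dist (g t) s + dist (f t) s := dist_triangle_right _ _ _
        _ ≤ c + ρ := add_le_add h1 h2.le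
    · rw [hgf ht, dist_self]
      positivity

theorem ContinuousMap.denseRange_of_tendsto {X ι : Type*} [TopologicalSpace X] [CompactSpace X]
    {l : Filter ι} [l.NeBot] {u : ι → C(X, K)} {F : C(X, K)} (hF : Tendsto u l (𝓝 F))
    {δ : ι → ℝ} (hδ : Tendsto δ l (𝓝 0)) (hu : ∀ n x, ∃ t, dist x (u n t) < δ n) :
    DenseRange F := by
  refine Metric.denseRange_iff.2 fun x r hr => ?_
  obtain ⟨n, hn, hδn⟩ :=
    ((tendsto_iff_dist_tendsto_zero.1 hF).eventually (gt_mem_nhds (half_pos hr))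
      |>.and (hδ.eventually (gt_mem_nhds (half_pos hr)))).exists
  obtain ⟨t, ht⟩ := hu n x
  refine ⟨t, ?_⟩
  calc dist x (F t) ≤ dist x (u n t) + dist (u n t) (F t) := dist_triangle _ _ _
    _ < r / 2 + r / 2 :=
      add_lt_add_of_lt_of_le (ht.trans hδn) ((u n).dist_apply_le_dist _ |>.trans hn.le)
    _ = r := add_halves r

end

theorem exists_seq_of_forall_exists {α : Type*} {P : ℕ → α → Prop} {R : ℕ → α → α → Prop}
    (h₀ : ∃ a, P 0 a) (h : ∀ n a, P n a → ∃ b, P (n + 1) b ∧ R n a b) :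
    ∃ u : ℕ → α, ∀ n, P n (u n) ∧ R n (u n) (u (n + 1)) := by
  choose next hnext using h
  obtain ⟨a₀, ha₀⟩ := h₀
  let v : ∀ n, {a // P n a} := fun n =>
    Nat.rec ⟨a₀, ha₀⟩ (fun n x => ⟨next n x x.2, (hnext n x x.2).1⟩) n
  exact ⟨fun n => (v n).1, fun n => ⟨(v n).2, (hnext n (v n).1 (v n).2).2⟩⟩

theorem exists_surjective_continuousMap_unitInterval {K : Type*} [MetricSpace K] [CompactSpace K]
    [Nonempty K] [PathConnectedSpace K] [LocallyPathConnectedSpace K] :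
    ∃ F : C(I, K), Surjective F := by
  choose δ hδ hδε hK using fun n : ℕ => exists_joinedInBalls (K := K) (pow_pos one_half_pos n)
  have base : ∃ f : C(I, K), ∀ x, ∃ t, dist x (f t) < δ 0 := by
    obtain ⟨p⟩ := ‹Nonempty K›
    obtain ⟨f, hf, -⟩ := (ContinuousMap.const I p).exists_dist_le_forall_exists_dist_lt
      diam_nonneg (hδ 0) (joinedInBalls_diam (diam univ + 1)) fun x =>
        ⟨0, (dist_le_diam_of_mem isCompact_univ.isBounded (mem_univ x) (mem_univ p)).trans_lt
          (lt_add_one _)⟩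
    exact ⟨f, hf⟩
  have step : ∀ n (f : C(I, K)), (∀ x, ∃ t, dist x (f t) < δ n) →
      ∃ g : C(I, K), (∀ x, ∃ t, dist x (g t) < δ (n + 1)) ∧ dist g f ≤ 2 * (1 / 2) ^ n := by
    intro n f hf
    obtain ⟨g, hg, hgf⟩ := f.exists_dist_le_forall_exists_dist_lt (pow_nonneg one_half_pos.le n)
      (hδ (n + 1)) (hK n) hf
    exact ⟨g, hg, hgf.trans (by linarith [hδε n])⟩
  obtain ⟨u, hu⟩ := exists_seq_of_forall_exists base step
  obtain ⟨F, hF⟩ := cauchySeq_tendsto_of_complete <| cauchySeq_of_le_geometric (1 / 2) 2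
    one_half_lt_one fun n => (dist_comm _ _).trans_le (hu n).2
  have hdense : DenseRange F := ContinuousMap.denseRange_of_tendsto hF
    (squeeze_zero (fun n => (hδ n).le) hδε
      (tendsto_pow_atTop_nhds_zero_of_lt_one one_half_pos.le one_half_lt_one))
    fun n => (hu n).1
  refine ⟨F, range_eq_univ.1 ?_⟩
  rw [← hdense.closure_range, (isCompact_range F.continuous).isClosed.closure_eq]

/-- Hahn–Mazurkiewicz: a compact metric space `K` is a continuous image of `[0,1]`
if and only if it is nonempty, connected and locally path-connected. -/
theorem continuous_image_of_unit_interval_iff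
    {K : Type*} [MetricSpace K] [CompactSpace K] :
    (∃ f : Set.Icc (0 : ℝ) 1 → K, Continuous f ∧ Function.Surjective f) ↔
      (Nonempty K ∧ ConnectedSpace K ∧ LocPathConnectedSpace K) := by
  constructor
  · rintro ⟨f, hf, hsurj⟩
    have := (convex_Icc (0 : ℝ) 1).locallyPathConnectedSpace
    exact ⟨⟨f ⟨0, left_mem_Icc.2 zero_le_one⟩⟩, hsurj.connectedSpace hf,
      (Topology.IsQuotientMap.of_surjective_continuous hsurj hf).locallyPathConnectedSpace⟩
  · rintro ⟨_, _, hK⟩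
    have : LocallyPathConnectedSpace K := hK
    have := PathConnectedSpace.of_locallyPathConnectedSpace (X := K)
    obtain ⟨F, hF⟩ := exists_surjective_continuousMap_unitInterval (K := K)
    exact ⟨F, F.continuous, hF⟩
end

section
/- Let A be a commutative unital C*-algebra generated by a countable family of projections p₁, p₂, …. Then the Gelfand spectrum of A is a totally disconnected compact metrizable space, and consequently there exists a self-adjoint element a ∈ A with A = C*(a) and σ(a) homeomorphic to a subset of the Cantor set. -/
/-!
A character takes only the values `0` and `1` on a projection, so recording these values on the
`p n` gives a continuous map from the character space to the Cantor space `ℕ → Bool`. Characters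
are determined by their values on a generating set, so this map is injective, hence an embedding of
the compact character space. Composing it with `ℕ → Bool ≃ₜ cantorSet ⊆ ℝ` yields an injective
real function on the character space; by Gelfand duality it is the Gelfand transform of a
self-adjoint `a`, which generates `A` by Stone–Weierstrass and whose spectrum, the range of that
function, is homeomorphic to the character space.
-/

open WeakDual Topology

namespace WeakDual.CharacterSpace

section NormedAlgebra

variable {A : Type*} [NormedRing A] [NormedAlgebra ℂ A] {p : ℕ → A}

lemma apply_eq_zero_or_one_of_isIdempotentElem (φ : characterSpace ℂ A) {e : A}
    (he : IsIdempotentElem e) : φ e = 0 ∨ φ e = 1 :=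
  IsIdempotentElem.iff_eq_zero_or_one.mp (he.map φ)

noncomputable def cantorCode (p : ℕ → A) (φ : characterSpace ℂ A) : ℕ → Bool :=
  fun n => decide (φ (p n) = 1)

lemma continuous_cantorCode (hp : ∀ n, IsIdempotentElem (p n)) : Continuous (cantorCode p) := by
  refine continuous_pi fun n => (continuous_bool_rng true).mpr ?_
  have heval : Continuous fun φ : characterSpace ℂ A => φ (p n) :=
    (eval_continuous (p n)).comp continuous_subtype_val
  have hone : (fun φ => cantorCode p φ n) ⁻¹' {true} = (fun φ => φ (p n)) ⁻¹' {1} := by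
    ext φ
    simp [cantorCode]
  have hne_zero : (fun φ => cantorCode p φ n) ⁻¹' {true} = ((fun φ => φ (p n)) ⁻¹' {0})ᶜ := by
    ext φ
    rcases apply_eq_zero_or_one_of_isIdempotentElem φ (hp n) with h | h <;> simp [cantorCode, h]
  exact ⟨hone ▸ isClosed_singleton.preimage heval,
    hne_zero ▸ (isClosed_singleton.preimage heval).isOpen_compl⟩

end NormedAlgebra

section CStarAlgebra

variable {A : Type*} [CStarAlgebra A] {p : ℕ → A}

lemma ext_of_topologicalClosure_adjoin_eq_top {s : Set A}
    (hs : (StarAlgebra.adjoin ℂ s).topologicalClosure = ⊤) ⦃φ ψ : characterSpace ℂ A⦄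
    (h : s.EqOn φ ψ) : φ = ψ := by
  have hdense : closure (StarAlgebra.adjoin ℂ s : Set A) = Set.univ :=
    congrArg SetLike.coe hs
  have heq : Set.EqOn φ ψ (closure (StarAlgebra.adjoin ℂ s : Set A)) :=
    Set.EqOn.closure (StarAlgHom.adjoin_le_equalizer φ ψ h) (map_continuous φ) (map_continuous ψ)
  exact ext fun x => heq (hdense ▸ Set.mem_univ x)

lemma injective_cantorCode (hp : ∀ n, IsIdempotentElem (p n))
    (hgen : (StarAlgebra.adjoin ℂ (Set.range p)).topologicalClosure = ⊤) :
    Function.Injective (cantorCode p) := by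
  intro φ ψ h
  refine ext_of_topologicalClosure_adjoin_eq_top hgen ?_
  rintro _ ⟨n, rfl⟩
  have hn : φ (p n) = 1 ↔ ψ (p n) = 1 := by simpa [cantorCode] using congrFun h n
  rcases apply_eq_zero_or_one_of_isIdempotentElem φ (hp n) with h₁ | h₁ <;>
    rcases apply_eq_zero_or_one_of_isIdempotentElem ψ (hp n) with h₂ | h₂ <;> simp_all

lemma isEmbedding_cantorCode (hp : ∀ n, IsIdempotentElem (p n))
    (hgen : (StarAlgebra.adjoin ℂ (Set.range p)).topologicalClosure = ⊤) :
    IsEmbedding (cantorCode p) :=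
  ((continuous_cantorCode hp).isClosedEmbedding (injective_cantorCode hp hgen)).isEmbedding

end CStarAlgebra

end WeakDual.CharacterSpace

section Gelfand

variable {A : Type*} [CommCStarAlgebra A]

lemma exists_isSelfAdjoint_injective_gelfandTransform {g : characterSpace ℂ A → ℝ}
    (hg : Continuous g) (hg_inj : Function.Injective g) :
    ∃ a : A, IsSelfAdjoint a ∧ Function.Injective (gelfandTransform ℂ A a) := by
  let f : C(characterSpace ℂ A, ℂ) := ⟨fun φ => (g φ : ℂ), by fun_prop⟩
  have hf : IsSelfAdjoint f := by
    ext φ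
    exact Complex.conj_ofReal _
  refine ⟨(gelfandStarTransform A).symm f, hf.map _, ?_⟩
  have : gelfandTransform ℂ A ((gelfandStarTransform A).symm f) = f :=
    (gelfandStarTransform A).apply_symm_apply f
  rw [this]
  exact fun φ ψ h => hg_inj (Complex.ofReal_injective h)

lemma topologicalClosure_adjoin_singleton_eq_top {a : A}
    (ha : Function.Injective (gelfandTransform ℂ A a)) :
    (StarAlgebra.adjoin ℂ {a}).topologicalClosure = ⊤ := by
  set T := gelfandStarTransform A
  have hsep : (StarAlgebra.adjoin ℂ {T a}).SeparatesPoints := fun φ ψ hφψ =>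
    ⟨T a, ⟨T a, StarAlgebra.self_mem_adjoin_singleton ℂ _, rfl⟩, ha.ne hφψ⟩
  have hdense := ContinuousMap.starSubalgebra_topologicalClosure_eq_top_of_separatesPoints _ hsep
  have hmap : StarSubalgebra.map (T.symm : C(characterSpace ℂ A, ℂ) →⋆ₐ[ℂ] A)
      (StarAlgebra.adjoin ℂ {T a}) = StarAlgebra.adjoin ℂ {a} := by
    rw [StarAlgHom.map_adjoin, Set.image_singleton]
    simp only [StarAlgHom.coe_coe, StarAlgEquiv.symm_apply_apply]
  have hle := StarSubalgebra.map_topologicalClosure_le (StarAlgebra.adjoin ℂ {T a})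
    (T.symm : C(characterSpace ℂ A, ℂ) →⋆ₐ[ℂ] A) (StarAlgEquiv.isometry T.symm).continuous
  rw [hmap, hdense] at hle
  exact eq_top_iff.mpr fun b _ => hle ⟨T b, trivial, T.symm_apply_apply b⟩

noncomputable def spectrumHomeomorphCharacterSpace {a : A}
    (ha : Function.Injective (gelfandTransform ℂ A a)) : spectrum ℂ a ≃ₜ characterSpace ℂ A :=
  have hrange : spectrum ℂ a = Set.range (gelfandTransform ℂ A a) := by
    rw [← spectrum.gelfandTransform_eq, ContinuousMap.spectrum_eq_range]
  (Homeomorph.setCongr hrange).trans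
    ((map_continuous _).isClosedEmbedding ha).isEmbedding.toHomeomorph.symm

end Gelfand

theorem spectrum_totally_disconnected_of_generated_by_projections_general
    {A : Type*} [NormedCommRing A] [StarRing A] [CStarRing A] [CompleteSpace A]
    [NormedAlgebra ℂ A] [StarModule ℂ A]
    (p : ℕ → A)
    (hidem : ∀ n, p n * p n = p n)
    (hgen : (StarAlgebra.adjoin ℂ (Set.range p)).topologicalClosure = ⊤) :
    (CompactSpace (WeakDual.characterSpace ℂ A) ∧
      TopologicalSpace.MetrizableSpace (WeakDual.characterSpace ℂ A) ∧
      TotallyDisconnectedSpace (WeakDual.characterSpace ℂ A)) ∧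
    ∃ a : A, IsSelfAdjoint a ∧
      (StarAlgebra.adjoin ℂ {a}).topologicalClosure = ⊤ ∧
      ∃ f : spectrum ℂ a → (ℕ → Bool), Topology.IsEmbedding f := by
  let _ : CommCStarAlgebra A := { ‹NormedCommRing A›, ‹StarRing A›, ‹CompleteSpace A›,
    ‹CStarRing A›, ‹NormedAlgebra ℂ A›, ‹StarModule ℂ A› with }
  have hcode := CharacterSpace.isEmbedding_cantorCode hidem hgen
  have hreal : IsEmbedding fun x => (cantorSetHomeomorphNatToBool.symm x : ℝ) :=
    IsEmbedding.subtypeVal.comp cantorSetHomeomorphNatToBool.symm.isEmbedding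
  obtain ⟨a, ha_sa, ha_inj⟩ := exists_isSelfAdjoint_injective_gelfandTransform
    (hreal.comp hcode).continuous (hreal.comp hcode).injective
  refine ⟨⟨inferInstance, hcode.metrizableSpace, ?_⟩, a, ha_sa,
    topologicalClosure_adjoin_singleton_eq_top ha_inj, _,
    hcode.comp (spectrumHomeomorphCharacterSpace ha_inj).isEmbedding⟩
  exact hcode.isTotallyDisconnected_range.mp (isTotallyDisconnected_of_totallyDisconnectedSpace _)

/-- If a commutative unital C*-algebra `A` is generated (as a unital C*-algebra) by a
countable family of projections `p₁, p₂, …`, then its Gelfand spectrum is a compact,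
metrizable, totally disconnected space, and consequently there is a self-adjoint `a ∈ A`
with `A = C*(a)` and `σ(a)` homeomorphic to a subset of the Cantor set (equivalently,
`σ(a)` embeds into the Cantor space `ℕ → Bool`). -/
theorem spectrum_totally_disconnected_of_generated_by_projections
    {A : Type*} [NormedCommRing A] [StarRing A] [CStarRing A] [CompleteSpace A]
    [NormedAlgebra ℂ A] [StarModule ℂ A]
    (p : ℕ → A)
    (hidem : ∀ n, p n * p n = p n) (hsa : ∀ n, star (p n) = p n)
    (hgen : (StarAlgebra.adjoin ℂ (Set.range p)).topologicalClosure = ⊤) :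
    (CompactSpace (WeakDual.characterSpace ℂ A) ∧
      TopologicalSpace.MetrizableSpace (WeakDual.characterSpace ℂ A) ∧
      TotallyDisconnectedSpace (WeakDual.characterSpace ℂ A)) ∧
    ∃ a : A, IsSelfAdjoint a ∧
      (StarAlgebra.adjoin ℂ {a}).topologicalClosure = ⊤ ∧
      ∃ f : spectrum ℂ a → (ℕ → Bool), Topology.IsEmbedding f :=
  spectrum_totally_disconnected_of_generated_by_projections_general p hidem hgen
end

section
/- An isometry in the Calkin algebra B(ℓ²)/K(ℓ²) need not lift to an isometry in B(ℓ²); consequently the Toeplitz algebra T is not W*-C*-projective. Also, since Mₙ(ℂ) (n ≥ 2) admits no unital *-homomorphism to ℂ, the identity map Mₙ(ℂ) → Mₙ(ℂ) does not lift through the surjection Mₙ(ℂ) ⊕ ℂ → Mₙ(ℂ), so Mₙ(ℂ) is not unitally W*-C*-projective. -/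
/-!
Let `W` be an isometry of `H` onto the orthogonal complement of a line, which exists because that
complement is again separable and infinite-dimensional, and put `T = W*`. Then `T*T - 1 = WW* - 1`
is minus a rank-one projection. If `S*S = 1` and `T - S` is compact, then `SW` is an injective
compact perturbation of `TW = 1`, hence surjective by the Fredholm alternative; as `S` is injective,
`W` would be surjective.

A unital ring map from the simple ring `Mₙ(ℂ)` to a commutative ring is injective, so it would make
`Mₙ(ℂ)` commutative. Composing a lift through `Mₙ(ℂ) × ℂ → Mₙ(ℂ)` with the second projection would
give such a map.
-/

open Function Metric

theorem ContinuousLinearMap.injective_of_mul_eq_one {R M : Type*} [Semiring R]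
    [TopologicalSpace M] [AddCommMonoid M] [Module R M] {A B : M →L[R] M} (h : A * B = 1) :
    Injective B :=
  LeftInverse.injective (g := A) fun x => by simpa using DFunLike.congr_fun h x

section FredholmAlternative

variable {𝕜 X : Type*} [NontriviallyNormedField 𝕜] [NormedAddCommGroup X] [NormedSpace 𝕜 X]
  [CompleteSpace X]

theorem IsCompactOperator.surjective_of_injective {B : X →L[𝕜] X}
    (hB : IsCompactOperator ⇑(B - 1)) (hinj : Injective B) : Surjective B := by
  rcases hB.hasEigenvalue_or_mem_resolventSet (neg_ne_zero.2 one_ne_zero) with h | h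
  · obtain ⟨x, hx⟩ := h.exists_hasEigenvector
    have hBx : B x - x = -x := by simpa using hx.apply_eq_smul
    exact absurd (hinj (by simpa using hBx)) hx.2
  · rw [spectrum.mem_resolventSet_iff] at h
    have hB : algebraMap 𝕜 (X →L[𝕜] X) (-1) - (B - 1) = -B := by
      rw [map_neg, map_one]; abel
    rw [hB, IsUnit.neg_iff, ContinuousLinearMap.isUnit_iff_bijective] at h
    exact h.2

theorem not_injective_of_isCompactOperator_sub {S T W : X →L[𝕜] X} (hTW : T * W = 1)
    (hW : ¬ Surjective W) (hTS : IsCompactOperator ⇑(T - S)) : ¬ Injective S := by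
  intro hS
  obtain ⟨y, hy⟩ := not_forall.1 hW
  have hSW : IsCompactOperator ⇑(S * W - 1) := by
    rw [show S * W - 1 = -((T - S) * W) by rw [sub_mul, hTW]; abel]
    exact (hTS.comp_clm W).neg
  obtain ⟨x, hx⟩ := hSW.surjective_of_injective
    (hS.comp (ContinuousLinearMap.injective_of_mul_eq_one hTW)) (S y)
  exact hy ⟨x, hS hx⟩

end FredholmAlternative

section SeparableHilbertSpace

variable {𝕜 E : Type*} [RCLike 𝕜] [NormedAddCommGroup E] [InnerProductSpace 𝕜 E]

theorem Orthonormal.norm_sub_sq_eq_two {ι : Type*} {v : ι → E} (hv : Orthonormal 𝕜 v)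
    {i j : ι} (hij : i ≠ j) : ‖v i - v j‖ ^ 2 = 2 := by
  rw [@norm_sub_sq 𝕜, hv.inner_eq_zero hij, hv.1 i, hv.1 j]
  norm_num

theorem Orthonormal.countable [TopologicalSpace.SeparableSpace E] {ι : Type*} {v : ι → E}
    (hv : Orthonormal 𝕜 v) : Countable ι := by
  refine Pairwise.countable_of_isOpen_disjoint (s := fun i => ball (v i) 2⁻¹)
    (fun i j hij => ball_disjoint_ball ?_) (fun _ => isOpen_ball)
    (fun _ => nonempty_ball.2 (by norm_num))
  rw [dist_eq_norm]
  nlinarith [hv.norm_sub_sq_eq_two hij, norm_nonneg (v i - v j)]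

theorem HilbertBasis.infinite_of_not_finiteDimensional {ι : Type*} (b : HilbertBasis ι 𝕜 E)
    (hE : ¬ FiniteDimensional 𝕜 E) : Infinite ι := by
  rw [← not_finite_iff_infinite]
  intro
  have := Fintype.ofFinite ι
  exact hE b.toOrthonormalBasis.toBasis.finiteDimensional_of_finite

theorem nonempty_hilbertBasis_nat [CompleteSpace E] [TopologicalSpace.SeparableSpace E]
    (hE : ¬ FiniteDimensional 𝕜 E) : Nonempty (HilbertBasis ℕ 𝕜 E) := by
  obtain ⟨w, b, -⟩ := exists_hilbertBasis 𝕜 E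
  have := b.orthonormal.countable
  have := b.infinite_of_not_finiteDimensional hE
  obtain ⟨e⟩ : Nonempty (ℕ ≃ w) := nonempty_equiv_of_countable
  refine ⟨HilbertBasis.mk (b.orthonormal.comp e e.injective) ?_⟩
  rw [e.surjective.range_comp]
  exact b.dense_span.ge

theorem nonempty_linearIsometryEquiv_of_separable {F : Type*} [NormedAddCommGroup F]
    [InnerProductSpace 𝕜 F] [CompleteSpace E] [CompleteSpace F]
    [TopologicalSpace.SeparableSpace E] [TopologicalSpace.SeparableSpace F]
    (hE : ¬ FiniteDimensional 𝕜 E) (hF : ¬ FiniteDimensional 𝕜 F) :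
    Nonempty (E ≃ₗᵢ[𝕜] F) := by
  obtain ⟨bE⟩ := nonempty_hilbertBasis_nat hE
  obtain ⟨bF⟩ := nonempty_hilbertBasis_nat hF
  exact ⟨bE.repr.trans bF.repr.symm⟩

theorem Submodule.not_finiteDimensional_orthogonal (U : Submodule 𝕜 E) [FiniteDimensional 𝕜 U]
    (hE : ¬ FiniteDimensional 𝕜 E) : ¬ FiniteDimensional 𝕜 Uᗮ := by
  intro hU
  have : FiniteDimensional 𝕜 ↥(U ⊔ Uᗮ) := Submodule.finiteDimensional_sup U Uᗮ
  rw [Submodule.sup_orthogonal_of_hasOrthogonalProjection] at this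
  exact hE (Module.Finite.equiv Submodule.topEquiv)

theorem exists_nonsurjective_isometry_compact_defect [CompleteSpace E]
    [TopologicalSpace.SeparableSpace E] (hE : ¬ FiniteDimensional 𝕜 E) :
    ∃ W : E →L[𝕜] E, star W * W = 1 ∧ IsCompactOperator ⇑(W * star W - 1) ∧
      ¬ Surjective W := by
  obtain ⟨e, he⟩ : ∃ e : E, e ≠ 0 := by
    by_contra! h
    have : Subsingleton E := ⟨fun x y => (h x).trans (h y).symm⟩
    exact hE inferInstance
  set U := 𝕜 ∙ e
  obtain ⟨L⟩ := nonempty_linearIsometryEquiv_of_separable (F := Uᗮ) hE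
    (U.not_finiteDimensional_orthogonal hE)
  set W : E →L[𝕜] E := Uᗮ.subtypeL ∘L (L : E →L[𝕜] Uᗮ)
  have hW : star W = (L.symm : Uᗮ →L[𝕜] E) ∘L Uᗮ.orthogonalProjectionOnto := by
    rw [ContinuousLinearMap.star_eq_adjoint, ContinuousLinearMap.adjoint_comp,
      L.adjoint_eq_symm, Uᗮ.adjoint_subtypeL]
  refine ⟨W, ?_, ?_, ?_⟩
  · ext x
    simp [hW, W]
  · have hdefect : W * star W - 1 = -U.starProjection := by
      ext x
      simp [hW, W, Submodule.starProjection_orthogonal']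
    rw [hdefect]
    exact ((isCompactOperator_of_locallyCompactSpace_dom U.orthogonalProjectionOnto).clm_comp
      U.subtypeL).neg
  · intro h
    obtain ⟨x, hx⟩ := h e
    have heU : e ∈ Uᗮ := hx ▸ (L x).2
    exact he (inner_self_eq_zero.1 (Submodule.mem_orthogonal_singleton_iff_inner_right.1 heU))

end SeparableHilbertSpace

theorem IsSimpleRing.commute_of_ringHom {R S : Type*} [Ring R] [IsSimpleRing R]
    [CommSemiring S] [Nontrivial S] (f : R →+* S) (a b : R) : Commute a b :=
  f.injective (by rw [map_mul, map_mul, mul_comm])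

theorem Matrix.not_commute_single {ι R : Type*} [Fintype ι] [DecidableEq ι] [Semiring R]
    [Nontrivial R] {i j : ι} (hij : i ≠ j) : ¬ Commute (single i j (1 : R)) (single j i 1) := by
  intro h
  simpa [hij] using congr_fun₂ h.eq i i

theorem Matrix.isEmpty_ringHom {ι R S : Type*} [Fintype ι] [DecidableEq ι] [Nontrivial ι]
    [Ring R] [IsSimpleRing R] [CommSemiring S] [Nontrivial S] :
    IsEmpty (Matrix ι ι R →+* S) := by
  obtain ⟨i, j, hij⟩ := exists_pair_ne ι
  exact ⟨fun f => not_commute_single (R := R) hij (IsSimpleRing.commute_of_ringHom f _ _)⟩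

/-- Proposition 4.16. (a) On an infinite-dimensional separable Hilbert space `H`, there is an
isometry of the Calkin algebra that does not lift to an isometry of `B(H)`: an operator `T`
with `1 - T*T` compact (so its image in the Calkin algebra is an isometry) such that no
compact perturbation `S` of `T` satisfies `S*S = 1`; consequently the Toeplitz algebra is
not W*-C*-projective. (b) For `n ≥ 2`, `Mₙ(ℂ)` admits no unital *-homomorphism to `ℂ`, and
the identity of `Mₙ(ℂ)` does not lift through the surjection `Mₙ(ℂ) ⊕ ℂ → Mₙ(ℂ)`; hence
`Mₙ(ℂ)` is not (unitally) W*-C*-projective. -/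
theorem toeplitz_and_matrices_not_WstarCstar_projective
    (H : Type*) [NormedAddCommGroup H] [InnerProductSpace ℂ H] [CompleteSpace H]
    [TopologicalSpace.SeparableSpace H] (hinf : ¬ FiniteDimensional ℂ H)
    (n : ℕ) (hn : 2 ≤ n) :
    (∃ T : H →L[ℂ] H, IsCompactOperator ⇑(star T * T - 1) ∧
      ∀ S : H →L[ℂ] H, IsCompactOperator ⇑(T - S) → star S * S ≠ 1) ∧
    IsEmpty (Matrix (Fin n) (Fin n) ℂ →⋆ₐ[ℂ] ℂ) ∧
    ¬ ∃ ψ : Matrix (Fin n) (Fin n) ℂ →⋆ₐ[ℂ] (Matrix (Fin n) (Fin n) ℂ × ℂ),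
        (StarAlgHom.fst ℂ (Matrix (Fin n) (Fin n) ℂ) ℂ).comp ψ =
          StarAlgHom.id ℂ (Matrix (Fin n) (Fin n) ℂ) := by
  have : Nontrivial (Fin n) := Fin.nontrivial_iff_two_le.2 hn
  have hchar : IsEmpty (Matrix (Fin n) (Fin n) ℂ →⋆ₐ[ℂ] ℂ) :=
    ⟨fun φ => Matrix.isEmpty_ringHom.false φ.toRingHom⟩
  obtain ⟨W, hWW, hdefect, hW⟩ := exists_nonsurjective_isometry_compact_defect hinf
  refine ⟨⟨star W, by rwa [star_star], fun S hTS hS => ?_⟩, hchar, ?_⟩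
  · exact not_injective_of_isCompactOperator_sub hWW hW hTS
      (ContinuousLinearMap.injective_of_mul_eq_one hS)
  · rintro ⟨ψ, -⟩
    exact hchar.false ((StarAlgHom.snd ℂ (Matrix (Fin n) (Fin n) ℂ) ℂ).comp ψ)
end

section
/- Suppose K is a Peano continuum (nonempty compact connected locally connected metric space) containing a homeomorphic copy of the circle S¹. Then C(K) is not W*-C*-projective: the composition of the restriction map j : C(K) → C(S¹) with the *-homomorphism ρ : C(S¹) → B(H)/K(H) sending the identity function z to the image of the unilateral shift does not lift to a *-homomorphism C(K) → B(H). -/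
/-!
If `γ` lifted `ρ ∘ j`, then `N := γ f`, for a Tietze extension `f` of `z`, would be a normal
operator with `π N = π T`, so `N - T` and `N⋆N - 1` are compact. With `P` the projection onto the
finite-dimensional space `ker N = ker N⋆`, the operator `R = N⋆ + P` is injective and `R T` is a
compact perturbation of the identity; by the Fredholm alternative the injective `R T` is onto,
hence so is `T`. A surjective isometry is unitary, contradicting `T T⋆ ≠ 1`.
-/

open Function

namespace ContinuousLinearMap

variable {𝕜 X : Type*} [NontriviallyNormedField 𝕜] [NormedAddCommGroup X] [NormedSpace 𝕜 X]
  [CompleteSpace X]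

theorem surjective_of_injective_of_isCompactOperator_sub_one {S : X →L[𝕜] X}
    (hS : IsCompactOperator ⇑(S - 1)) (hinj : Injective S) : Surjective S := by
  rcases IsCompactOperator.hasEigenvalue_or_mem_resolventSet (μ := (-1 : 𝕜)) hS
    (neg_ne_zero.2 one_ne_zero) with heig | hres
  · obtain ⟨x, hx, hx0⟩ := heig.exists_hasEigenvector
    refine absurd (hinj ?_) hx0
    rw [Module.End.mem_eigenspace_iff] at hx
    simpa using hx
  · rw [spectrum.mem_resolventSet_iff, map_neg, map_one, neg_sub_left, sub_add_cancel,
      IsUnit.neg_iff, isUnit_iff_bijective] at hres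
    exact hres.2

end ContinuousLinearMap

theorem Submodule.isCompactOperator_starProjection {𝕜 E : Type*} [RCLike 𝕜] [NormedAddCommGroup E]
    [InnerProductSpace 𝕜 E] (U : Submodule 𝕜 E) [U.HasOrthogonalProjection]
    [FiniteDimensional 𝕜 U] : IsCompactOperator U.starProjection :=
  haveI : ProperSpace U := FiniteDimensional.proper 𝕜 U
  (isCompactOperator_of_locallyCompactSpace_dom U.orthogonalProjectionOnto).clm_comp U.subtypeL

section Hilbert

open ContinuousLinearMap

variable {𝕜 E : Type*} [RCLike 𝕜] [NormedAddCommGroup E] [InnerProductSpace 𝕜 E] [CompleteSpace E]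
  {N T : E →L[𝕜] E}

theorem ContinuousLinearMap.finiteDimensional_ker_of_isCompactOperator_star_mul_self_sub_one
    (hN : IsCompactOperator ⇑(star N * N - 1)) : FiniteDimensional 𝕜 N.ker := by
  have hle : N.ker ≤ Module.End.eigenspace (star N * N - 1 : E →L[𝕜] E).toLinearMap (-1) :=
    fun x (hx : N x = 0) => by
      rw [Module.End.mem_eigenspace_iff]
      simp [hx]
  have := finite_dimensional_eigenspace hN (-1 : 𝕜) (neg_ne_zero.2 one_ne_zero)
  exact Submodule.finiteDimensional_of_le hle

namespace IsStarNormal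

theorem injective_star_add_starProjection_ker (hN : IsStarNormal N) :
    Injective (star N + N.ker.starProjection) := by
  refine (injective_iff_map_eq_zero _).2 fun x hx => ?_
  set u := N.ker.starProjection x
  have hu : N u = 0 := N.ker.starProjection_apply_mem x
  have hNx : star N x = -u := eq_neg_of_add_eq_zero_left hx
  -- `star N x ∈ (ker N)ᗮ` while `u ∈ ker N`
  have hu0 : u = 0 := by
    have : inner 𝕜 (star N x) u = 0 := by
      rw [star_eq_adjoint, adjoint_inner_left, hu, inner_zero_right]
    rwa [hNx, inner_neg_left, neg_eq_zero, inner_self_eq_zero] at this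
  have hxker : x ∈ N.ker :=
    (hN.adjoint_apply_eq_zero_iff x).1 (by rw [← star_eq_adjoint, hNx, hu0, neg_zero])
  rw [← Submodule.starProjection_eq_self_iff.2 hxker]
  exact hu0

theorem surjective_of_isCompactOperator_sub (hN : IsStarNormal N)
    (hN1 : IsCompactOperator ⇑(star N * N - 1)) (hNT : IsCompactOperator ⇑(N - T))
    (hT : Injective T) : Surjective T := by
  have := finiteDimensional_ker_of_isCompactOperator_star_mul_self_sub_one hN1
  set R := star N + N.ker.starProjection
  have hR := hN.injective_star_add_starProjection_ker
  have hRT : IsCompactOperator ⇑(R * T - 1) := by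
    have h : R * T - 1 = (star N * N - 1) - star N * (N - T) + N.ker.starProjection * T := by
      simp only [R, add_mul, mul_sub]
      abel
    rw [h, FunLike.coe_add, FunLike.coe_sub, FunLike.coe_mul_eq_comp, FunLike.coe_mul_eq_comp]
    exact (hN1.sub (hNT.clm_comp _)).add
      (N.ker.isCompactOperator_starProjection.comp_clm T)
  have hRTsurj := surjective_of_injective_of_isCompactOperator_sub_one hRT (hR.comp hT)
  intro y
  obtain ⟨x, hx⟩ := hRTsurj (R y)
  exact ⟨x, hR hx⟩

theorem mul_star_self_eq_one_of_isCompactOperator_sub (hN : IsStarNormal N)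
    (hN1 : IsCompactOperator ⇑(star N * N - 1)) (hNT : IsCompactOperator ⇑(N - T))
    (hT : star T * T = 1) : T * star T = 1 := by
  have hleft : LeftInverse ⇑(star T) T := fun x => congr($hT x)
  ext1 x
  exact hleft.rightInverse_of_surjective
    (hN.surjective_of_isCompactOperator_sub hN1 hNT hleft.injective) x

end IsStarNormal

end Hilbert

theorem peano_continuum_with_circle_not_liftable_general
    {K : Type*} [MetricSpace K]
    (e : Circle → K) (he : Topology.IsEmbedding e)
    {H : Type*} [NormedAddCommGroup H] [InnerProductSpace ℂ H] [CompleteSpace H]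
    {M : Type*} [NormedRing M] [StarRing M]
    [NormedAlgebra ℂ M]
    (π : (H →L[ℂ] H) →⋆ₐ[ℂ] M)
    (hker : ∀ S : H →L[ℂ] H, π S = 0 ↔ IsCompactOperator ⇑S)
    (T : H →L[ℂ] H) (hT_isom : star T * T = 1) (hT_proper : T * star T ≠ 1)
    (ρ : C(Circle, ℂ) →⋆ₐ[ℂ] M)
    (hρ : ρ ⟨fun w => (w : ℂ), continuous_subtype_val⟩ = π T) :
    ¬ ∃ γ : C(K, ℂ) →⋆ₐ[ℂ] (H →L[ℂ] H),
        ∀ f : C(K, ℂ), π (γ f) = ρ (f.comp ⟨e, he.continuous⟩) := by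
  rintro ⟨γ, hγ⟩
  obtain ⟨f, hf⟩ := ContinuousMap.exists_extension
    ⟨he, (isCompact_range he.continuous).isClosed⟩ ⟨fun w => (w : ℂ), continuous_subtype_val⟩
  have hπN : π (γ f) = π T := by rw [hγ, hf, hρ]
  have hNT : IsCompactOperator ⇑(γ f - T) := (hker _).1 (by rw [map_sub, hπN, sub_self])
  have hN1 : IsCompactOperator ⇑(star (γ f) * γ f - 1) := (hker _).1 (by
    rw [map_sub, map_mul, map_star, hπN, ← map_star, ← map_mul, hT_isom, sub_self])
  exact hT_proper ((IsStarNormal.map γ f).mul_star_self_eq_one_of_isCompactOperator_sub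
    hN1 hNT hT_isom)

/-- Proof of Proposition 4.7: let `K` be a Peano continuum containing a copy of the circle
`S¹` (via a topological embedding `e`). Let `H` be a Hilbert space, `π : B(H) → M` a
surjective unital *-homomorphism with kernel the compact operators, `T ∈ B(H)` a proper
isometry with compact defect (e.g. the unilateral shift), and `ρ : C(S¹) → M` the unital
*-homomorphism sending the identity function `z` to `π(T)`. Then the composition of the
restriction map `j : C(K) → C(S¹)`, `j f = f ∘ e`, with `ρ` does not lift to a unital
*-homomorphism `C(K) → B(H)`; hence `C(K)` is not W*-C*-projective. -/
theorem peano_continuum_with_circle_not_liftable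
    {K : Type*} [MetricSpace K] [CompactSpace K] [ConnectedSpace K]
    [LocallyConnectedSpace K] [Nonempty K]
    (e : Circle → K) (he : Topology.IsEmbedding e)
    {H : Type*} [NormedAddCommGroup H] [InnerProductSpace ℂ H] [CompleteSpace H]
    {M : Type*} [NormedRing M] [StarRing M] [CStarRing M] [CompleteSpace M]
    [NormedAlgebra ℂ M] [StarModule ℂ M]
    (π : (H →L[ℂ] H) →⋆ₐ[ℂ] M) (hπ : Function.Surjective π)
    (hker : ∀ S : H →L[ℂ] H, π S = 0 ↔ IsCompactOperator ⇑S)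
    (T : H →L[ℂ] H) (hT_isom : star T * T = 1) (hT_proper : T * star T ≠ 1)
    (hT_defect : IsCompactOperator ⇑(1 - T * star T))
    (ρ : C(Circle, ℂ) →⋆ₐ[ℂ] M)
    (hρ : ρ ⟨fun w => (w : ℂ), continuous_subtype_val⟩ = π T) :
    ¬ ∃ γ : C(K, ℂ) →⋆ₐ[ℂ] (H →L[ℂ] H),
        ∀ f : C(K, ℂ), π (γ f) = ρ (f.comp ⟨e, he.continuous⟩) :=
  peano_continuum_with_circle_not_liftable_general e he π hker T hT_isom hT_proper ρ hρ
end
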